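/- arXiv:1803.01822 — 3 statements merged into one kernel-verified Lean document; each statement's English description precedes it below -/
import Mathlib

section
/- Any two closed antipodal curves on the 2-sphere intersect. Precisely: if f, g : ℝ → S² are continuous, periodic maps (say f(t+1)=f(t) and g(t+1)=g(t) for all t) whose images are each closed under the antipodal map x ↦ −x, then the images of f and g have a common point. -/
/-!
Stereographic projection `σ` from a point `v` of the second curve sends antipodal points to points
on opposite rays from the origin. An arc of the first curve from `x` to `-x`, followed by its
antipodal image, thus becomes a closed curve in `ℂ` winding an odd number of times around
`σ(-v) = 0`, while the arc of the second curve from `-v` towards `v` becomes a path starting at `0`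
and leaving every bounded set. If the curves were disjoint, the winding number around the moving
point of this path would stay constant, yet it vanishes once that point is far away.
-/

open Complex Set Filter Topology Metric Module
open scoped RealInnerProductSpace

namespace Complex

variable {X : Type*} [TopologicalSpace X]

theorem exists_continuous_exp_eq [SimplyConnectedSpace X] [LocallyPathConnectedSpace X]
    {F : X → ℂ} (hF : Continuous F) (hF0 : ∀ x, F x ≠ 0) :
    ∃ Θ : X → ℂ, Continuous Θ ∧ ∀ x, exp (Θ x) = F x := by
  obtain ⟨x₀⟩ := PathConnectedSpace.nonempty (X := X)
  obtain ⟨Θ, ⟨-, hΘ⟩, -⟩ := isCoveringMapOn_exp.existsUnique_continuousMap_lifts ⟨F, hF⟩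
    (exp_log (hF0 x₀)) hF0
  exact ⟨Θ, Θ.continuous, congrFun hΘ⟩

theorem apply_eq_of_exp_eq_const [PreconnectedSpace X] {φ : X → ℂ} (hφ : Continuous φ)
    {c : ℂ} (h : ∀ x, exp (φ x) = c) (x y : X) : φ x = φ y :=
  isCoveringMap_exp.const_of_comp hφ (fun x y ↦ Subtype.ext ((h x).trans (h y).symm)) x y

theorem exp_im_mul_I_eq_neg_one {z : ℂ} {r : ℝ} (hr : 0 < r) (h : exp z = -r) :
    exp (z.im * I) = -1 := by
  have hz : exp (z.im * I) = ((-r / Real.exp z.re : ℝ) : ℂ) := by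
    rw [ofReal_div, ofReal_exp, ofReal_neg, ← h, ← exp_sub]
    congr 1
    apply Complex.ext <;> simp
  have hnorm := norm_exp_ofReal_mul_I z.im
  rw [hz, norm_real, Real.norm_eq_abs,
    abs_of_neg (div_neg_of_neg_of_pos (neg_neg_of_pos hr) (Real.exp_pos _))] at hnorm
  rw [hz, show -r / Real.exp z.re = -1 by linarith]
  simp

theorem sub_eq_log_sub_log_of_norm_lt [PreconnectedSpace X] {Θ γ : X → ℂ} {w : ℂ}
    (hΘ : Continuous Θ) (hγ : Continuous γ) (hexp : ∀ x, exp (Θ x) = γ x - w)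
    (hlt : ∀ x, ‖γ x‖ < ‖w‖) (x y : X) :
    Θ x - Θ y = log (1 - γ x / w) - log (1 - γ y / w) := by
  have hw : ∀ x, w ≠ 0 := fun x ↦ norm_pos_iff.mp ((norm_nonneg _).trans_lt (hlt x))
  have hslit : ∀ x, 1 - γ x / w ∈ slitPlane := fun x ↦ by
    rw [sub_eq_add_neg]
    refine mem_slitPlane_of_norm_lt_one ?_
    rw [norm_neg, norm_div, div_lt_one (norm_pos_iff.mpr (hw x))]
    exact hlt x
  have key := apply_eq_of_exp_eq_const (φ := fun x ↦ Θ x - log (1 - γ x / w))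
    (hΘ.sub ((continuous_const.sub (hγ.div_const w)).clog hslit)) (c := -w) (fun x ↦ by
      rw [exp_sub, exp_log (slitPlane_ne_zero (hslit x)), hexp,
        div_eq_iff (slitPlane_ne_zero (hslit x))]
      field_simp [hw x]
      ring) x y
  linear_combination key

theorem im_sub_add_sub_ne_zero [PreconnectedSpace X] {Θa Θb : X → ℂ}
    (hΘa : Continuous Θa) (hΘb : Continuous Θb)
    (hab : ∀ x, ∃ r : ℝ, 0 < r ∧ exp (Θb x) = -(r * exp (Θa x)))
    {p q : X} (hpq : exp (Θa q) = exp (Θb p)) :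
    (Θa q - Θa p + (Θb q - Θb p)).im ≠ 0 := by
  -- The increments of `Θa` and `Θb` have the same imaginary part, an odd multiple of `π`:
  -- `Im (Θb - Θa)` is continuous with values in `π + 2πℤ`.
  have hdiv : ∀ x, ∃ r : ℝ, 0 < r ∧ exp (Θb x) / exp (Θa x) = -r := fun x ↦ by
    obtain ⟨r, hr, h⟩ := hab x
    exact ⟨r, hr, by rw [h]; field_simp [exp_ne_zero]⟩
  have hθ : exp ((Θa q - Θa p).im * I) = -1 := by
    obtain ⟨r, hr, h⟩ := hdiv p
    exact exp_im_mul_I_eq_neg_one hr (by rw [exp_sub, hpq, h])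
  have hD := apply_eq_of_exp_eq_const (φ := fun x ↦ ((Θb x - Θa x).im : ℂ) * I) (by fun_prop)
    (fun x ↦ by
      obtain ⟨r, hr, h⟩ := hdiv x
      exact exp_im_mul_I_eq_neg_one hr (by rw [exp_sub, h])) q p
  have hD' : (Θb q - Θa q).im = (Θb p - Θa p).im := by simpa using congrArg im hD
  intro h0
  have hθ0 : (Θa q - Θa p).im = 0 := by
    simp only [sub_im, add_im] at h0 hD' ⊢
    linarith
  rw [hθ0] at hθ
  norm_num at hθ

theorem exists_eq_of_escaping_path {a b w : ℝ → ℂ} (ha : Continuous a) (hb : Continuous b)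
    (hw : Continuous w) (hab : ∀ t, ∃ r : ℝ, 0 < r ∧ b t = -(r * a t))
    (ha1 : a 1 = b 0) (hb1 : b 1 = a 0) (hw0 : w 0 = 0)
    (hw1 : ∀ t, ‖a t‖ < ‖w 1‖ ∧ ‖b t‖ < ‖w 1‖) :
    ∃ s t, a t = w s ∨ b t = w s := by
  by_contra! h
  obtain ⟨Θa, hΘa, hexpa⟩ := exists_continuous_exp_eq (F := fun p : ℝ × ℝ ↦ a p.2 - w p.1)
    (by fun_prop) (fun p ↦ sub_ne_zero.2 (h p.1 p.2).1)
  obtain ⟨Θb, hΘb, hexpb⟩ := exists_continuous_exp_eq (F := fun p : ℝ × ℝ ↦ b p.2 - w p.1)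
    (by fun_prop) (fun p ↦ sub_ne_zero.2 (h p.1 p.2).2)
  -- `ω s / 2πi` is the winding number around `w s` of the closed curve `a` followed by `b`.
  let ω : ℝ → ℂ := fun s ↦ Θa (s, 1) - Θa (s, 0) + (Θb (s, 1) - Θb (s, 0))
  have hω : ω 0 = ω 1 := apply_eq_of_exp_eq_const (by fun_prop) (c := 1) (fun s ↦ by
    have ha0 := sub_ne_zero.2 (h s 0).1
    have hb0 := sub_ne_zero.2 (h s 0).2
    simp only [ω, exp_add, exp_sub, hexpa, hexpb, ha1, hb1]
    field_simp) 0 1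
  have hω₁ : ω 1 = 0 := by
    have hΘa₁ := sub_eq_log_sub_log_of_norm_lt (Θ := fun t ↦ Θa (1, t)) (by fun_prop) ha
      (fun t ↦ hexpa (1, t)) (fun t ↦ (hw1 t).1) 1 0
    have hΘb₁ := sub_eq_log_sub_log_of_norm_lt (Θ := fun t ↦ Θb (1, t)) (by fun_prop) hb
      (fun t ↦ hexpb (1, t)) (fun t ↦ (hw1 t).2) 1 0
    simp only [ω, hΘa₁, hΘb₁, ha1, hb1]
    ring
  have hω₀ : (ω 0).im ≠ 0 := by
    refine im_sub_add_sub_ne_zero (Θa := fun t ↦ Θa (0, t)) (Θb := fun t ↦ Θb (0, t))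
      (by fun_prop) (by fun_prop) (fun t ↦ ?_) (p := 0) (q := 1) ?_
    · obtain ⟨r, hr, hrt⟩ := hab t
      exact ⟨r, hr, by simp only [hexpa, hexpb, hw0, sub_zero, hrt]⟩
    · simp only [hexpa, hexpb, ha1]
  exact hω₀ (by rw [hω, hω₁, zero_im])

end Complex

theorem Path.extend_mem_range {X : Type*} [TopologicalSpace X] {x y : X} (γ : Path x y)
    (t : ℝ) : γ.extend t ∈ range γ :=
  γ.extend_range ▸ mem_range_self t

theorem exists_first_mem {X : Type*} [TopologicalSpace X] {c : ℝ → X} (hc : Continuous c)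
    {K : Set X} (hK : IsClosed K) (h0 : c 0 ∉ K) {T : ℝ} (hT : 0 ≤ T) (hcT : c T ∈ K) :
    ∃ τ, 0 < τ ∧ c τ ∈ K ∧ ∀ s ∈ Ico 0 τ, c s ∉ K := by
  set S := Ici 0 ∩ c ⁻¹' K
  have hS : sInf S ∈ S :=
    (isClosed_Ici.inter (hK.preimage hc)).csInf_mem ⟨T, hT, hcT⟩ ⟨0, fun _ hs ↦ hs.1⟩
  refine ⟨sInf S, lt_of_le_of_ne hS.1 fun h ↦ h0 (h ▸ hS.2), hS.2, fun s hs hsK ↦ ?_⟩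
  exact hs.2.not_ge (csInf_le ⟨0, fun _ hs ↦ hs.1⟩ ⟨hs.1, hsK⟩)

section Stereographic

variable {E : Type*} [NormedAddCommGroup E] [InnerProductSpace ℝ E] {v : E}

theorem continuousOn_stereoToFun_sphere (hv : ‖v‖ = 1) :
    ContinuousOn (stereoToFun v) (sphere 0 1 \ {v}) :=
  continuousOn_stereoToFun.mono fun x hx h ↦
    hx.2 ((inner_eq_one_iff_of_norm_eq_one hv (by simpa using hx.1)).1 h).symm

theorem stereoToFun_injOn (hv : ‖v‖ = 1) : InjOn (stereoToFun v) (sphere 0 1 \ {v}) := by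
  intro x hx y hy hxy
  have h := congrArg (stereoInvFun hv) hxy
  rwa [stereo_left_inv hv (x := ⟨x, hx.1⟩) hx.2, stereo_left_inv hv (x := ⟨y, hy.1⟩) hy.2,
    Subtype.mk.injEq] at h

theorem stereoToFun_neg {x : E} (h₁ : ⟪v, x⟫ ≠ 1) (h₂ : ⟪v, x⟫ ≠ -1) :
    stereoToFun v (-x) = -(((1 - ⟪v, x⟫) / (1 + ⟪v, x⟫)) • stereoToFun v x) := by
  have h₁' : 1 - ⟪v, x⟫ ≠ 0 := sub_ne_zero.2 h₁.symm
  have h₂' : 1 + ⟪v, x⟫ ≠ 0 := fun h ↦ h₂ (by linarith)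
  simp only [stereoToFun_apply, innerSL_apply_apply, map_neg, smul_neg, smul_smul,
    neg_inj, sub_neg_eq_add]
  congr 1
  field_simp

theorem exists_pos_stereoToFun_neg_eq (hv : ‖v‖ = 1) {x : E} (hx : x ∈ sphere 0 1 \ {v})
    (hx' : -x ∈ sphere 0 1 \ {v}) :
    ∃ r : ℝ, 0 < r ∧ stereoToFun v (-x) = -(r • stereoToFun v x) := by
  have hxS : ‖x‖ = 1 := by simpa using hx.1
  have h₁ : ⟪v, x⟫ < 1 := (inner_lt_one_iff_real_of_norm_eq_one hv hxS).2 (Ne.symm hx.2)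
  have h₂ : -1 < ⟪v, x⟫ := by
    have := (inner_lt_one_iff_real_of_norm_eq_one hv (by simpa using hxS)).2 (Ne.symm hx'.2)
    rw [inner_neg_right] at this
    linarith
  exact ⟨_, div_pos (by linarith) (by linarith), stereoToFun_neg h₁.ne h₂.ne'⟩

theorem norm_stereoToFun_sq_mul (hv : ‖v‖ = 1) {x : E} (hx : ‖x‖ = 1) (hxv : ⟪v, x⟫ ≠ 1) :
    ‖stereoToFun v x‖ ^ 2 * (1 - ⟪v, x⟫) = 4 * (1 + ⟪v, x⟫) := by
  have hpy : ‖(ℝ ∙ v)ᗮ.orthogonalProjectionOnto x‖ ^ 2 = 1 - ⟪v, x⟫ ^ 2 := by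
    have h := Submodule.norm_sq_eq_add_norm_sq_projection x (ℝ ∙ v)
    change _ = ‖(ℝ ∙ v).starProjection x‖ ^ 2 + _ at h
    rw [Submodule.starProjection_unit_singleton ℝ hv, norm_smul, hv, hx, Real.norm_eq_abs,
      mul_one, sq_abs, one_pow] at h
    linarith
  rw [stereoToFun_apply, norm_smul, mul_pow, hpy, Real.norm_eq_abs, sq_abs, innerSL_apply_apply]
  field_simp [sub_ne_zero.2 hxv.symm]
  ring

theorem tendsto_norm_stereoToFun (hv : ‖v‖ = 1) :
    Tendsto (fun x ↦ ‖stereoToFun v x‖) (𝓝[sphere 0 1 \ {v}] v) atTop := by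
  refine tendsto_atTop.2 fun R ↦ ?_
  have hε : 0 < 4 / (R ^ 2 + 4) := by positivity
  have hnear : ∀ᶠ x in 𝓝[sphere 0 1 \ {v}] v, 1 - 4 / (R ^ 2 + 4) < ⟪v, x⟫ :=
    nhdsWithin_le_nhds <| (continuous_const.inner continuous_id).continuousAt.eventually_const_lt
      (by simp only [id, real_inner_self_eq_norm_sq, hv]; linarith)
  filter_upwards [hnear, self_mem_nhdsWithin] with x hx ⟨hxS, hxv⟩
  rw [mem_sphere_zero_iff_norm] at hxS
  have hlt : ⟪v, x⟫ < 1 := (inner_lt_one_iff_real_of_norm_eq_one hv hxS).2 (Ne.symm hxv)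
  have hsq := norm_stereoToFun_sq_mul hv hxS hlt.ne
  have hε4 : 4 / (R ^ 2 + 4) * (R ^ 2 + 4) = 4 := div_mul_cancel₀ _ (by positivity)
  have : R ^ 2 ≤ ‖stereoToFun v x‖ ^ 2 := by nlinarith
  exact (abs_le_of_sq_le_sq' this (norm_nonneg _)).2

theorem exists_path_lt_norm_stereoToFun (hv : ‖v‖ = 1) (c : Path (-v) v)
    (hc : ∀ s, ‖c s‖ = 1) (R : ℝ) :
    ∃ u, R < ‖stereoToFun v u‖ ∧ ∃ w : Path (-v) u, ∀ s, w s ∈ range c \ {v} := by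
  have hv0 : -v ≠ v := fun h ↦ by
    have := congrArg (⟪v, ·⟫) h
    norm_num [hv] at this
  obtain ⟨τ, hτ, hcτ, hbefore⟩ := exists_first_mem c.extend.continuous isClosed_singleton
    (by rwa [c.extend_zero]) zero_le_one (by rw [c.extend_one]; rfl)
  have hlim : Tendsto c.extend (𝓝[<] τ) (𝓝[sphere 0 1 \ {v}] v) := by
    refine tendsto_nhdsWithin_iff.2 ⟨?_, mem_of_superset (Ioo_mem_nhdsLT hτ) fun s hs ↦
      ⟨?_, hbefore s ⟨hs.1.le, hs.2⟩⟩⟩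
    · have := (c.extend.continuous.tendsto τ).mono_left (nhdsWithin_le_nhds (s := Iio τ))
      rwa [mem_singleton_iff.1 hcτ] at this
    · obtain ⟨s', hs'⟩ := c.extend_mem_range s
      simpa [← hs'] using hc s'
  obtain ⟨s₁, hR, hs₁⟩ :=
    ((((tendsto_norm_stereoToFun hv).comp hlim).eventually_gt_atTop R).and
      (Ioo_mem_nhdsLT hτ)).exists
  refine ⟨_, hR, ⟨⟨fun t ↦ c.extend (s₁ * t), by fun_prop⟩, by simp, by simp⟩, fun t ↦
    ⟨c.extend_mem_range _, hbefore _ ⟨mul_nonneg hs₁.1.le t.2.1, ?_⟩⟩⟩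
  calc s₁ * t ≤ s₁ := mul_le_of_le_one_right hs₁.1.le t.2.2
    _ < τ := hs₁.2

end Stereographic

theorem exists_complex_stereographic {E : Type*} [NormedAddCommGroup E] [InnerProductSpace ℝ E]
    (hE : finrank ℝ E = 3) {v : E} (hv : ‖v‖ = 1) :
    ∃ σ : E → ℂ, ContinuousOn σ (sphere 0 1 \ {v}) ∧ InjOn σ (sphere 0 1 \ {v}) ∧ σ (-v) = 0 ∧
      (∀ x ∈ sphere 0 1 \ {v}, -x ∈ sphere 0 1 \ {v} → ∃ r : ℝ, 0 < r ∧ σ (-x) = -(r * σ x)) ∧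
      ∀ x, ‖σ x‖ = ‖stereoToFun v x‖ := by
  have : Fact (finrank ℝ E = 2 + 1) := ⟨hE⟩
  let e : (ℝ ∙ v)ᗮ ≃ₗᵢ[ℝ] ℂ := (Complex.isometryOfOrthonormal
    (OrthonormalBasis.fromOrthogonalSpanSingleton 2 (by rintro rfl; simp at hv))).symm
  refine ⟨fun x ↦ e (stereoToFun v x), e.continuous.comp_continuousOn
    (continuousOn_stereoToFun_sphere hv), fun x hx y hy hxy ↦ stereoToFun_injOn hv hx hy
    (e.injective hxy), by simp, fun x hx hx' ↦ ?_, fun x ↦ e.norm_map _⟩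
  obtain ⟨r, hr, hrx⟩ := exists_pos_stereoToFun_neg_eq hv hx hx'
  exact ⟨r, hr, by simp only [hrx, map_neg, map_smul, Complex.real_smul]⟩

theorem exists_eq_or_neg_eq_of_antipodal_paths {E : Type*} [NormedAddCommGroup E]
    [InnerProductSpace ℝ E] (hE : finrank ℝ E = 3) {x v : E} (α : Path x (-x))
    (c : Path (-v) v) (hα : ∀ t, ‖α t‖ = 1) (hc : ∀ s, ‖c s‖ = 1) :
    ∃ t s, α t = c s ∨ -α t = c s := by
  by_contra! h
  have hv : ‖v‖ = 1 := by simpa using hc 1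
  obtain ⟨σ, hσ, hσinj, hσv, hσneg, hσnorm⟩ := exists_complex_stereographic hE hv
  have hα' : ∀ z ∈ range α, z ∈ sphere 0 1 \ {v} ∧ -z ∈ sphere 0 1 \ {v} := by
    rintro _ ⟨t, rfl⟩
    rw [← c.target]
    exact ⟨⟨by simpa using hα t, (h t 1).1⟩, ⟨by simpa using hα t, (h t 1).2⟩⟩
  obtain ⟨R, hR⟩ : ∃ R, ∀ z ∈ range α, ‖‖σ z‖ + ‖σ (-z)‖‖ ≤ R :=
    (isCompact_range α.continuous).exists_bound_of_continuousOn
      ((hσ.comp continuousOn_id fun z hz ↦ (hα' z hz).1).norm.add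
        (hσ.comp continuousOn_neg fun z hz ↦ (hα' z hz).2).norm)
  obtain ⟨u, hu, w, hw⟩ := exists_path_lt_norm_stereoToFun hv c hc R
  have hwS : ∀ s, w.extend s ∈ sphere 0 1 \ {v} := fun s ↦ by
    obtain ⟨s', hs'⟩ := w.extend_mem_range s
    obtain ⟨⟨s'', hs''⟩, hv'⟩ := hs' ▸ hw s'
    exact ⟨by simpa [← hs''] using hc s'', hv'⟩
  have hbound : ∀ z ∈ range α, ‖σ z‖ < ‖σ u‖ ∧ ‖σ (-z)‖ < ‖σ u‖ := fun z hz ↦ by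
    have := hR z hz
    rw [Real.norm_of_nonneg (by positivity)] at this
    constructor <;> linarith [norm_nonneg (σ z), norm_nonneg (σ (-z)), hσnorm u]
  obtain ⟨s, t, hst⟩ := Complex.exists_eq_of_escaping_path (a := fun t ↦ σ (α.extend t))
    (b := fun t ↦ σ (-α.extend t)) (w := fun s ↦ σ (w.extend s))
    (hσ.comp_continuous α.extend.continuous fun t ↦ (hα' _ (α.extend_mem_range t)).1)
    (hσ.comp_continuous α.extend.continuous.neg fun t ↦ (hα' _ (α.extend_mem_range t)).2)
    (hσ.comp_continuous w.extend.continuous hwS)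
    (fun t ↦ hσneg _ (hα' _ (α.extend_mem_range t)).1 (hα' _ (α.extend_mem_range t)).2)
    (by simp) (by simp) (by simpa using hσv)
    (fun t ↦ by simpa using hbound _ (α.extend_mem_range t))
  obtain ⟨t', ht'⟩ := α.extend_mem_range t
  obtain ⟨s', hs'⟩ := w.extend_mem_range s
  obtain ⟨s'', hs''⟩ := (hw s').1
  rw [← ht', ← hs', ← hs''] at hst
  rcases hst with hst | hst
  · exact (h t' s'').1 (hσinj (hα' _ ⟨t', rfl⟩).1 (hs'' ▸ hs' ▸ hwS s) hst)
  · exact (h t' s'').2 (hσinj (hα' _ ⟨t', rfl⟩).2 (hs'' ▸ hs' ▸ hwS s) hst)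

theorem antipodal_curves_intersect_general (f g : ℝ → EuclideanSpace ℝ (Fin 3))
    (hf : Continuous f) (hg : Continuous g)
    (hfs : ∀ t, ‖f t‖ = 1) (hgs : ∀ t, ‖g t‖ = 1)
    (hfa : ∀ x ∈ Set.range f, -x ∈ Set.range f)
    (hga : ∀ x ∈ Set.range g, -x ∈ Set.range g) :
    (Set.range f ∩ Set.range g).Nonempty := by
  obtain ⟨t₁, ht₁⟩ := hfa (f 0) ⟨0, rfl⟩
  obtain ⟨s₁, hs₁⟩ := hga (g 0) ⟨0, rfl⟩
  let α : Path (f 0) (-f 0) := ⟨⟨fun t ↦ f (t * t₁), by fun_prop⟩, by simp, by simp [ht₁]⟩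
  let c : Path (-g 0) (g 0) := ⟨⟨fun s ↦ g ((1 - s) * s₁), by fun_prop⟩, by simp [hs₁], by simp⟩
  obtain ⟨t, s, h | h⟩ := exists_eq_or_neg_eq_of_antipodal_paths finrank_euclideanSpace_fin α c
    (fun _ ↦ hfs _) (fun _ ↦ hgs _)
  · exact ⟨_, ⟨_, rfl⟩, ⟨_, h.symm⟩⟩
  · exact ⟨_, hfa _ ⟨_, rfl⟩, ⟨_, h.symm⟩⟩

/-- Two closed (periodic continuous) antipodal curves on the 2-sphere intersect. -/
theorem antipodal_curves_intersect (f g : ℝ → EuclideanSpace ℝ (Fin 3))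
    (hf : Continuous f) (hg : Continuous g)
    (hfs : ∀ t, ‖f t‖ = 1) (hgs : ∀ t, ‖g t‖ = 1)
    (hfp : ∀ t, f (t + 1) = f t) (hgp : ∀ t, g (t + 1) = g t)
    (hfa : ∀ x ∈ Set.range f, -x ∈ Set.range f)
    (hga : ∀ x ∈ Set.range g, -x ∈ Set.range g) :
    (Set.range f ∩ Set.range g).Nonempty :=
  antipodal_curves_intersect_general f g hf hg hfs hgs hfa hga
end

section
/- Let C be a shortest odd cycle of length g in a graph G with vertices v₁,…,v_g in cyclic order, and for each vertex w let dist(w,C) be its distance to C. Suppose u, w are adjacent in G, dist(u,C) = k with a shortest path from u ending at v_ℓ, and dist(w,C) = k' with a shortest path from w ending at v_{ℓ'}. If k + k' + 1 < min(|ℓ−ℓ'| mod g, g − (|ℓ−ℓ'| mod g)), then we reach a contradiction; hence the cyclic distance between ℓ and ℓ' on C is at most k + k' + 1. -/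
open SimpleGraph Walk

/-- A closed walk with nodup support is nil. -/
lemma loop_nodup_length_zero {V : Type*} {G : SimpleGraph V} {b : V} (p : G.Walk b b)
    (h : p.support.Nodup) : p.length = 0 := by
  cases p with
  | nil => rfl
  | cons h' r =>
    exfalso
    simp only [Walk.support_cons, List.nodup_cons] at h
    exact h.1 r.end_mem_support

/-- A path from `c` to `b` containing the edge `s(b,c)` has length 1. -/
lemma path_edge_length_one {V : Type*} {G : SimpleGraph V} :
    ∀ {c b : V} (q : G.Walk c b), q.support.Nodup → s(b, c) ∈ q.edges → q.length = 1 := by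
  intro c b q
  induction q with
  | nil => intro _ he; simp at he
  | @cons c c₁ b h' q' ih =>
    intro hnd he
    simp only [Walk.support_cons, List.nodup_cons] at hnd
    simp only [Walk.edges_cons, List.mem_cons] at he
    rcases he with he | he
    · rw [Sym2.eq_iff] at he
      rcases he with ⟨hb, hc⟩ | ⟨hb, _⟩
      · exact absurd (hb ▸ q'.end_mem_support) hnd.1
      · subst hb
        simp [Walk.length_cons, loop_nodup_length_zero q' hnd.2]
    · exact absurd (q'.snd_mem_support_of_mem_edges he) hnd.1

/-- Any odd closed walk contains an odd cycle of at most its length. -/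
lemma exists_odd_cycle_of_odd_closed_walk {V : Type*} {G : SimpleGraph V} :
    ∀ (n : ℕ) {b : V} (W : G.Walk b b), W.length ≤ n → Odd W.length →
    ∃ (c : V) (D : G.Walk c c), D.IsCycle ∧ Odd D.length ∧ D.length ≤ W.length := by
  intro n
  induction n with
  | zero =>
    intro b W hle hodd
    rw [Nat.le_zero] at hle
    simp [hle] at hodd
  | succ n ih =>
    intro b W hle hodd
    classical
    have hW0 : W.length ≠ 0 := by rintro h; simp [h] at hodd
    have hWnil : ¬ W.Nil := by rw [Walk.nil_iff_length_eq]; exact hW0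
    obtain ⟨c, h, q, rfl⟩ := Walk.not_nil_iff.mp hWnil
    by_cases hq : q.support.Nodup
    · by_cases he : s(b, c) ∈ q.edges
      · exfalso
        have := path_edge_length_one q hq he
        rw [Walk.length_cons, this] at hodd
        simp [Nat.odd_iff] at hodd
      · refine ⟨b, Walk.cons h q, ?_, hodd, le_rfl⟩
        exact (Walk.cons_isCycle_iff q h).mpr ⟨Walk.IsPath.mk' hq, he⟩
    · -- find a duplicated vertex and split
      obtain ⟨x, hx⟩ := List.exists_duplicate_iff_not_nodup.mpr hq
      have hxm : x ∈ q.support := hx.mem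
      have hcount : 2 ≤ q.support.count x := List.duplicate_iff_two_le_count.mp hx
      set tk := q.takeUntil x hxm with htk
      set dr := q.dropUntil x hxm with hdr
      have hspec : tk.append dr = q := q.take_spec hxm
      have hsup : q.support = tk.support ++ dr.support.tail := by
        rw [← hspec, Walk.support_append]
      have hc1 : tk.support.count x = 1 := q.count_support_takeUntil_eq_one hxm
      have hxdr : x ∈ dr.support.tail := by
        have : 2 ≤ tk.support.count x + dr.support.tail.count x := by
          rw [← List.count_append, ← hsup]; exact hcount
        rw [hc1] at this
        exact List.count_pos_iff.mp (by omega)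
      have hdrnil : ¬ dr.Nil := by
        intro hn
        rw [Walk.nil_iff_length_eq] at hn
        have h1 : dr.support.length = 1 := by rw [Walk.length_support, hn]
        have h2 : dr.support.tail = [] :=
          List.eq_nil_of_length_eq_zero (by simp [List.length_tail, h1])
        rw [h2] at hxdr
        simp at hxdr
      obtain ⟨c', h', r, hdreq⟩ := Walk.not_nil_iff.mp hdrnil
      have hxr : x ∈ r.support := by
        rw [hdreq] at hxdr; simpa using hxdr
      -- the two closed walks
      set M : G.Walk x x := Walk.cons h' (r.takeUntil x hxr) with hM
      set W' : G.Walk b b := Walk.cons h (tk.append (r.dropUntil x hxr)) with hW'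
      have hrlen : r.length = (r.takeUntil x hxr).length + (r.dropUntil x hxr).length := by
        conv_lhs => rw [← r.take_spec hxr]
        rw [Walk.length_append]
      have hqlen : q.length = tk.length + (r.length + 1) := by
        conv_lhs => rw [← hspec]
        rw [Walk.length_append, hdreq, Walk.length_cons]
      have hMlen : M.length = (r.takeUntil x hxr).length + 1 := by
        simp [hM, Walk.length_cons]
      have hW'len : W'.length = tk.length + (r.dropUntil x hxr).length + 1 := by
        simp [hW', Walk.length_cons, Walk.length_append]
      have hsplit : (Walk.cons h q).length = M.length + W'.length := by
        rw [Walk.length_cons, hqlen, hMlen, hW'len, hrlen]; omega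
      have hM1 : 1 ≤ M.length := by omega
      have hW'1 : 1 ≤ W'.length := by omega
      rcases Nat.even_or_odd M.length with hMe | hMo
      · have hW'o : Odd W'.length := by
          rw [hsplit, Nat.odd_add] at hodd
          rw [Nat.odd_iff, Nat.even_iff] at *
          omega
        obtain ⟨cc, D, h1, h2, h3⟩ := ih W' (by omega) hW'o
        exact ⟨cc, D, h1, h2, by omega⟩
      · obtain ⟨cc, D, h1, h2, h3⟩ := ih M (by omega) hMo
        exact ⟨cc, D, h1, h2, by omega⟩

/-- Forward arcs along a closed walk. -/
lemma arc_exists {V : Type*} {G : SimpleGraph V} {a : V} (C : G.Walk a a) :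
    ∀ (m i : ℕ), i + m ≤ C.length →
      ∃ p : G.Walk (C.getVert i) (C.getVert (i + m)), p.length = m := by
  intro m
  induction m with
  | zero => intro i _; exact ⟨Walk.nil, rfl⟩
  | succ m ih =>
    intro i hle
    obtain ⟨p, hp⟩ := ih i (by omega)
    have hadj : G.Adj (C.getVert (i + m)) (C.getVert (i + m + 1)) :=
      C.adj_getVert_succ (by omega)
    exact ⟨p.concat hadj, by rw [Walk.length_concat, hp]⟩

/-- Cyclic arcs: from `v_i` to `v_j` of length `(j + g - i) % g`. -/
lemma arc_cyclic {V : Type*} {G : SimpleGraph V} {a : V} (C : G.Walk a a) (g : ℕ)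
    (hg : g = C.length) (hgpos : 0 < g) (i j : ℕ) (hi : i < g) (hj : j < g) :
    ∃ p : G.Walk (C.getVert i) (C.getVert j), p.length = (j + g - i) % g := by
  rcases le_or_gt i j with hij | hij
  · have hmod : (j + g - i) % g = j - i := by
      have h1 : j + g - i = (j - i) + g := by omega
      rw [h1, Nat.add_mod_right, Nat.mod_eq_of_lt (by omega)]
    obtain ⟨p, hp⟩ := arc_exists C (j - i) i (by omega)
    have hcast : C.getVert (i + (j - i)) = C.getVert j := by congr 1; omega
    exact ⟨p.copy rfl hcast, by rw [Walk.length_copy, hp, hmod]⟩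
  · have hmod : (j + g - i) % g = j + g - i := Nat.mod_eq_of_lt (by omega)
    obtain ⟨p1, hp1⟩ := arc_exists C (g - i) i (by omega)
    obtain ⟨p2, hp2⟩ := arc_exists C j 0 (by omega)
    have hcast1 : C.getVert (i + (g - i)) = C.getVert 0 := by
      have : i + (g - i) = C.length := by omega
      rw [this, C.getVert_length, C.getVert_zero]
    have hcast2 : C.getVert (0 + j) = C.getVert j := by congr 1; omega
    refine ⟨(p1.copy rfl hcast1).append (p2.copy rfl hcast2), ?_⟩
    rw [Walk.length_append, Walk.length_copy, Walk.length_copy, hp1, hp2, hmod]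
    omega


/-- Along a shortest odd cycle `C = v_0 … v_{g-1}`, if `uw` is an edge, `u` is at
distance `k` from `C` with closest vertex `v_ℓ` and `w` at distance `k'` with
closest vertex `v_{ℓ'}`, then the cyclic distance between `ℓ` and `ℓ'` is at
most `k + k' + 1`. -/
theorem cyclic_distance_bound {V : Type*} [Fintype V] {G : SimpleGraph V} {a : V}
    (C : G.Walk a a) (hC : C.IsCycle) (hodd : Odd C.length)
    (hmin : ∀ (b : V) (D : G.Walk b b), D.IsCycle → Odd D.length → C.length ≤ D.length)
    (g : ℕ) (hg : g = C.length)
    (u w : V) (huw : G.Adj u w)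
    (k k' ℓ ℓ' : ℕ) (hℓ : ℓ < g) (hℓ' : ℓ' < g)
    (hu1 : ∃ p : G.Walk u (C.getVert ℓ), p.length = k)
    (hu2 : ∀ i < g, ∀ p : G.Walk u (C.getVert i), k ≤ p.length)
    (hw1 : ∃ p : G.Walk w (C.getVert ℓ'), p.length = k')
    (hw2 : ∀ i < g, ∀ p : G.Walk w (C.getVert i), k' ≤ p.length) :
    min ((ℓ' + g - ℓ) % g) ((ℓ + g - ℓ') % g) ≤ k + k' + 1 := by
  by_contra hcon
  push_neg at hcon
  rw [lt_min_iff] at hcon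
  obtain ⟨hd1, hd2⟩ := hcon
  have hgodd : Odd g := hg ▸ hodd
  have hgpos : 0 < g := hgodd.pos
  set d1 := (ℓ' + g - ℓ) % g with hd1def
  set d2 := (ℓ + g - ℓ') % g with hd2def
  have hne : ℓ ≠ ℓ' := by
    intro h
    subst h
    have : d1 = 0 := by
      rw [hd1def, show ℓ + g - ℓ = g by omega, Nat.mod_self]
    omega
  have hsum : d1 + d2 = g := by
    rcases Nat.lt_trichotomy ℓ ℓ' with h | h | h
    · have e1 : d1 = ℓ' - ℓ := by
        rw [hd1def, show ℓ' + g - ℓ = (ℓ' - ℓ) + g by omega, Nat.add_mod_right,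
          Nat.mod_eq_of_lt (by omega)]
      have e2 : d2 = ℓ + g - ℓ' := by
        rw [hd2def, Nat.mod_eq_of_lt (by omega)]
      omega
    · exact absurd h hne
    · have e1 : d1 = ℓ' + g - ℓ := by
        rw [hd1def, Nat.mod_eq_of_lt (by omega)]
      have e2 : d2 = ℓ - ℓ' := by
        rw [hd2def, show ℓ + g - ℓ' = (ℓ - ℓ') + g by omega, Nat.add_mod_right,
          Nat.mod_eq_of_lt (by omega)]
      omega
  obtain ⟨pu, hpu⟩ := hu1
  obtain ⟨pw, hpw⟩ := hw1
  obtain ⟨A1, hA1⟩ := arc_cyclic C g hg hgpos ℓ ℓ' hℓ hℓ'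
  obtain ⟨A2, hA2⟩ := arc_cyclic C g hg hgpos ℓ' ℓ hℓ' hℓ
  rcases Nat.even_or_odd (k + d1 + k' + 1) with hpar | hpar
  · -- use the other arc: walk at w
    set W : G.Walk w w :=
      pw.append (A2.append (pu.reverse.append (Walk.cons huw Walk.nil))) with hW
    have hWlen : W.length = k' + d2 + k + 1 := by
      simp [hW, Walk.length_append, Walk.length_cons, Walk.length_nil,
        Walk.length_reverse, hpu, hpw, hA2]
      omega
    have hWodd : Odd W.length := by
      rw [hWlen]
      rw [Nat.even_iff] at hpar
      rw [Nat.odd_iff] at hgodd ⊢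
      omega
    have hWlt : W.length < C.length := by
      rw [hWlen, ← hg]; omega
    obtain ⟨c, D, hcyc, hDodd, hDle⟩ :=
      exists_odd_cycle_of_odd_closed_walk W.length W le_rfl hWodd
    have := hmin c D hcyc hDodd
    omega
  · set W : G.Walk u u :=
      pu.append (A1.append (pw.reverse.append (Walk.cons huw.symm Walk.nil))) with hW
    have hWlen : W.length = k + d1 + k' + 1 := by
      simp [hW, Walk.length_append, Walk.length_cons, Walk.length_nil,
        Walk.length_reverse, hpu, hpw, hA1]
      omega
    have hWodd : Odd W.length := by rw [hWlen]; exact hpar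
    have hWlt : W.length < C.length := by
      rw [hWlen, ← hg]; omega
    obtain ⟨c, D, hcyc, hDodd, hDle⟩ :=
      exists_odd_cycle_of_odd_closed_walk W.length W le_rfl hWodd
    have := hmin c D hcyc hDodd
    omega
end

section
/- Let G be a finite simple graph with iocp(G) ≤ 1 that contains an odd cycle C. Then T = N[C] is an odd cycle transversal of G, i.e., G − N[C] is bipartite. -/
open SimpleGraph

private lemma aux_path_len_one {V : Type*} {G : SimpleGraph V} {a b : V}
    (p : G.Walk b a) (hp : p.IsPath) (hab : a ≠ b) (he : s(a, b) ∈ p.edges) :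
    p.length = 1 := by
  cases p with
  | nil => simp at he
  | cons h' p' =>
    rename_i c
    rw [SimpleGraph.Walk.edges_cons, List.mem_cons] at he
    rcases he with he | he
    · have hca : c = a := by
        rw [Sym2.eq_iff] at he
        rcases he with ⟨h1, h2⟩ | ⟨h1, h2⟩
        · exact absurd h1 hab
        · exact h1.symm
      subst hca
      have := (SimpleGraph.Walk.cons_isPath_iff _ _).mp hp
      have : p' = SimpleGraph.Walk.nil := SimpleGraph.Walk.isPath_iff_eq_nil.mp this.1
      simp [this]
    · have hb : b ∈ p'.support := SimpleGraph.Walk.snd_mem_support_of_mem_edges _ he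
      have := (SimpleGraph.Walk.cons_isPath_iff _ _).mp hp
      exact absurd hb this.2

private lemma aux_extract_loop {V : Type*} {G : SimpleGraph V} {x a : V}
    (q : G.Walk x a) (hx : x ∈ q.support.tail) :
    ∃ (c : G.Walk x x) (r : G.Walk x a), c.length + r.length = q.length ∧ 1 ≤ c.length ∧
      (∀ y ∈ c.support, y ∈ q.support) ∧ (∀ y ∈ r.support, y ∈ q.support) := by
  classical
  cases q with
  | nil => simp at hx
  | cons h2 r0 =>
    rw [SimpleGraph.Walk.support_cons, List.tail_cons] at hx
    refine ⟨SimpleGraph.Walk.cons h2 (r0.takeUntil x hx), r0.dropUntil x hx, ?_, ?_, ?_, ?_⟩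
    · have := congrArg SimpleGraph.Walk.length (r0.take_spec hx)
      rw [SimpleGraph.Walk.length_append] at this
      simp only [SimpleGraph.Walk.length_cons]
      omega
    · simp [SimpleGraph.Walk.length_cons]
    · intro y hy
      rw [SimpleGraph.Walk.support_cons, List.mem_cons] at hy ⊢
      rcases hy with rfl | hy
      · exact Or.inl rfl
      · exact Or.inr (SimpleGraph.Walk.support_takeUntil_subset r0 hx hy)
    · intro y hy
      rw [SimpleGraph.Walk.support_cons]
      exact List.mem_cons_of_mem _ (SimpleGraph.Walk.support_dropUntil_subset r0 hx hy)

/-- Every odd closed walk contains an odd cycle whose support is inside the walk's support. -/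
private lemma aux_exists_odd_cycle {V : Type*} {G : SimpleGraph V} :
    ∀ (n : ℕ) {a : V} (w : G.Walk a a), w.length = n → Odd n →
    ∃ (b : V) (c : G.Walk b b), c.IsCycle ∧ Odd c.length ∧ ∀ x ∈ c.support, x ∈ w.support := by
  classical
  intro n
  induction n using Nat.strong_induction_on with
  | _ n ih =>
    intro a w hlen hodd
    cases w with
    | nil =>
      simp only [SimpleGraph.Walk.length_nil] at hlen
      subst hlen
      exact absurd hodd (by decide)
    | cons h p =>
      rename_i b
      rw [SimpleGraph.Walk.length_cons] at hlen
      by_cases hp : p.IsPath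
      · by_cases he : s(a, b) ∈ p.edges
        · have h1 : p.length = 1 := aux_path_len_one p hp h.ne he
          rw [h1] at hlen
          subst hlen
          exact absurd hodd (by decide)
        · refine ⟨a, SimpleGraph.Walk.cons h p,
            (SimpleGraph.Walk.cons_isCycle_iff p h).mpr ⟨hp, he⟩, ?_, fun x hx => hx⟩
          rw [SimpleGraph.Walk.length_cons, hlen]
          exact hodd
      · rw [SimpleGraph.Walk.isPath_def] at hp
        obtain ⟨x, hdup⟩ := List.exists_duplicate_iff_not_nodup.mpr hp
        have hx2 : 2 ≤ p.support.count x := List.duplicate_iff_two_le_count.mp hdup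
        have hxs : x ∈ p.support := hdup.mem
        have hcount1 : (p.takeUntil x hxs).support.count x = 1 :=
          p.count_support_takeUntil_eq_one hxs
        have hsupp : p.support = (p.takeUntil x hxs).support ++ (p.dropUntil x hxs).support.tail := by
          conv_lhs => rw [← p.take_spec hxs]
          rw [SimpleGraph.Walk.support_append]
        have hxt : x ∈ (p.dropUntil x hxs).support.tail := by
          by_contra hxt
          rw [hsupp, List.count_append, hcount1, List.count_eq_zero_of_not_mem hxt] at hx2
          omega
        obtain ⟨c1, r2, hlen12, hc1pos, hc1sub, hr2sub⟩ := aux_extract_loop (p.dropUntil x hxs) hxt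
        have hlenq : (p.takeUntil x hxs).length + (p.dropUntil x hxs).length = p.length := by
          have := congrArg SimpleGraph.Walk.length (p.take_spec hxs)
          rw [SimpleGraph.Walk.length_append] at this
          exact this
        -- second closed walk
        set c2 : G.Walk x x := r2.append (SimpleGraph.Walk.cons h (p.takeUntil x hxs)) with hc2
        have hlenc2 : c2.length = r2.length + (p.takeUntil x hxs).length + 1 := by
          rw [hc2, SimpleGraph.Walk.length_append, SimpleGraph.Walk.length_cons]
          omega
        have hsum : c1.length + c2.length = n := by omega
        have hc2pos : 1 ≤ c2.length := by omega
        have hsub1 : ∀ y ∈ c1.support, y ∈ (SimpleGraph.Walk.cons h p).support := by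
          intro y hy
          rw [SimpleGraph.Walk.support_cons]
          exact List.mem_cons_of_mem _
            (SimpleGraph.Walk.support_dropUntil_subset p hxs (hc1sub y hy))
        have hsub2 : ∀ y ∈ c2.support, y ∈ (SimpleGraph.Walk.cons h p).support := by
          intro y hy
          rw [hc2, SimpleGraph.Walk.mem_support_append_iff] at hy
          rw [SimpleGraph.Walk.support_cons]
          rcases hy with hy | hy
          · exact List.mem_cons_of_mem _
              (SimpleGraph.Walk.support_dropUntil_subset p hxs (hr2sub y hy))
          · rw [SimpleGraph.Walk.support_cons, List.mem_cons] at hy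
            rcases hy with rfl | hy
            · exact List.mem_cons_self
            · exact List.mem_cons_of_mem _ (SimpleGraph.Walk.support_takeUntil_subset p hxs hy)
        have hodd' : Odd c1.length ∨ Odd c2.length := by
          rcases Nat.even_or_odd c1.length with h1 | h1
          · right
            rcases hodd with ⟨k, hk⟩
            rcases h1 with ⟨m, hm⟩
            exact ⟨k - m, by omega⟩
          · left; exact h1
        rcases hodd' with h1 | h1
        · obtain ⟨b', c', hc', hoddc', hsubc'⟩ :=
            ih c1.length (by omega) c1 rfl h1
          exact ⟨b', c', hc', hoddc', fun y hy => hsub1 y (hsubc' y hy)⟩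
        · obtain ⟨b', c', hc', hoddc', hsubc'⟩ :=
            ih c2.length (by omega) c2 rfl h1
          exact ⟨b', c', hc', hoddc', fun y hy => hsub2 y (hsubc' y hy)⟩

/-- A graph with no odd closed walk is 2-colorable. -/
private lemma aux_colorable_two {V : Type*} (H : SimpleGraph V)
    (h : ∀ (a : V) (w : H.Walk a a), ¬ Odd w.length) : H.Colorable 2 := by
  classical
  refine ⟨SimpleGraph.Coloring.mk
    (fun v => ⟨H.dist ((H.connectedComponentMk v).out) v % 2, Nat.mod_lt _ (by norm_num)⟩) ?_⟩
  intro u v huv heq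
  have hcomp : H.connectedComponentMk u = H.connectedComponentMk v :=
    SimpleGraph.ConnectedComponent.sound huv.reachable
  set r := (H.connectedComponentMk u).out with hr
  have hru : H.Reachable r u := SimpleGraph.ConnectedComponent.eq.mp
    (show H.connectedComponentMk r = H.connectedComponentMk u from
      (H.connectedComponentMk u).out_eq)
  have hrv : H.Reachable r v := SimpleGraph.ConnectedComponent.eq.mp
    (show H.connectedComponentMk r = H.connectedComponentMk v from
      hcomp ▸ (H.connectedComponentMk u).out_eq)
  obtain ⟨p, hpl⟩ := hru.exists_walk_length_eq_dist
  obtain ⟨q, hql⟩ := hrv.exists_walk_length_eq_dist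
  have heq' : H.dist r u % 2 = H.dist r v % 2 := by
    have := congrArg (fun x : Fin 2 => (x : ℕ)) heq
    simpa [hr, hcomp] using this
  have hw : Odd ((p.append (SimpleGraph.Walk.cons huv q.reverse)).length) := by
    rw [SimpleGraph.Walk.length_append, SimpleGraph.Walk.length_cons,
      SimpleGraph.Walk.length_reverse, hpl, hql, Nat.odd_iff]
    omega
  exact h r _ hw

/-- If `iocp(G) ≤ 1` and `C` is an odd cycle of `G`, then `N[C]` is an odd cycle
transversal: `G − N[C]` is bipartite (2-colorable). -/
theorem closed_nbhd_is_oct {V : Type*} [Fintype V] (G : SimpleGraph V)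
    (hiocp : ∀ (a b : V) (c₁ : G.Walk a a) (c₂ : G.Walk b b),
      c₁.IsCycle → c₂.IsCycle → Odd c₁.length → Odd c₂.length →
      (∀ x ∈ c₁.support, ∀ y ∈ c₂.support, x ≠ y ∧ ¬G.Adj x y) → False)
    {a : V} (C : G.Walk a a) (hC : C.IsCycle) (hodd : Odd C.length) :
    (G.induce {v : V | ¬(v ∈ C.support ∨ ∃ u ∈ C.support, G.Adj u v)}).Colorable 2 := by
  classical
  set S : Set V := {v : V | ¬(v ∈ C.support ∨ ∃ u ∈ C.support, G.Adj u v)} with hS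
  refine aux_colorable_two _ ?_
  intro a' w hw
  -- map the odd closed walk into G
  let f : G.induce S →g G := ⟨Subtype.val, fun {x y} hxy => hxy⟩
  have hwlen : (w.map f).length = w.length := SimpleGraph.Walk.length_map _ _
  obtain ⟨b, c₂, hcyc, hoddc, hsub⟩ :=
    aux_exists_odd_cycle (w.map f).length (w.map f) rfl (hwlen ▸ hw)
  refine hiocp a b C c₂ hC hcyc hodd hoddc ?_
  intro x hx y hy
  have hyS : y ∈ S := by
    have := hsub y hy
    rw [SimpleGraph.Walk.support_map, List.mem_map] at this
    obtain ⟨⟨y', hy'⟩, _, rfl⟩ := this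
    exact hy'
  rw [hS, Set.mem_setOf_eq] at hyS
  push_neg at hyS
  exact ⟨fun hh => hyS.1 (hh ▸ hx), fun hadj => (hyS.2 x hx) hadj⟩
end
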